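/- arXiv:1607.08002 — 4 statements merged into one kernel-verified Lean document; each statement's English description precedes it below -/
import Mathlib

section
/- Suppose W is a Hermitian operator on ℂ² ⊗ ℂ² such that for decompositions W = ∑_{s,t} β^{i,j}_{s,t} (m_i τ_s m_i†)ᵀ ⊗ (m_j ω_t m_j†)ᵀ (for each i,j ∈ {1,2,3,4}, with m_1=I, m_2=σ_z, m_3=σ_x, m_4=σ_xσ_z, and density matrices τ_s, ω_t), and define, for a separable state σ_AB = ∑_x p_x σ_A^x ⊗ σ_B^x (p_x ≥ 0, ∑ p_x = 1) and arbitrary POVMs {A_i}, {B_j} on ℂ²⊗ℂ², I(σ_AB) = ∑_{s,t,i,j} β^{i,j}_{s,t} Tr[(A_i ⊗ B_j)(τ_s ⊗ σ_AB ⊗ ω_t)]. If Tr[W σ] ≥ 0 for all product states σ = α ⊗ β with α, β positive semidefinite, then I(σ_AB) ≥ 0. -/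
open Matrix Kronecker ComplexOrder

noncomputable section

def IsDensity {n : Type*} [Fintype n] [DecidableEq n] (ρ : Matrix n n ℂ) : Prop :=
  ρ.PosSemidef ∧ ρ.trace = 1

def σx : Matrix (Fin 2) (Fin 2) ℂ := !![0, 1; 1, 0]
def σz : Matrix (Fin 2) (Fin 2) ℂ := !![1, 0; 0, -1]

/-- m₁ = I, m₂ = σ_z, m₃ = σ_x, m₄ = σ_x σ_z. -/
def mMat : Fin 4 → Matrix (Fin 2) (Fin 2) ℂ := ![1, σz, σx, σx * σz]

/-- The four-partite state τ ⊗ σ_AB ⊗ ω with tensor factors ordered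
(ancilla A, system A, system B, ancilla B). -/
def bigState (τ ω : Matrix (Fin 2) (Fin 2) ℂ)
    (σ : Matrix (Fin 2 × Fin 2) (Fin 2 × Fin 2) ℂ) :
    Matrix ((Fin 2 × Fin 2) × (Fin 2 × Fin 2)) ((Fin 2 × Fin 2) × (Fin 2 × Fin 2)) ℂ :=
  fun p q => τ p.1.1 q.1.1 * σ (p.1.2, p.2.1) (q.1.2, q.2.1) * ω p.2.2 q.2.2

/-!
Let `M = Tr₂[A_i (1 ⊗ σ_A^x)]` and `N = Tr₁[B_j (σ_B^x ⊗ 1)]`. Both are positive semidefinite, and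
`Tr[A_i (τ_s ⊗ σ_A^x)] = Tr[M τ_s]`, `Tr[B_j (σ_B^x ⊗ ω_t)] = Tr[N ω_t]`, so
`I(σ_AB) = ∑_x p_x ∑_{i,j} ∑_{s,t} β^{i,j}_{s,t} Tr[M τ_s] Tr[N ω_t]`. Since `m_i` and `m_j` are
unitary, the decomposition of `W` for the pair `(i, j)` turns the inner sum into
`Tr[W ((m_i M m_i†)ᵀ ⊗ (m_j N m_j†)ᵀ)]`, which is nonnegative because both tensor factors are
positive semidefinite.
-/

namespace Matrix

variable {n m : Type*} [Fintype m]

/-- `Tr₂[A (1 ⊗ σ)]`. -/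
def partialTraceRight (A : Matrix (n × m) (n × m) ℂ) (σ : Matrix m m ℂ) : Matrix n n ℂ :=
  of fun a c => ∑ b, ∑ d, A (a, b) (c, d) * σ d b

/-- `Tr₁[A (σ ⊗ 1)]`. -/
def partialTraceLeft (A : Matrix (m × n) (m × n) ℂ) (σ : Matrix m m ℂ) : Matrix n n ℂ :=
  of fun b d => ∑ a, ∑ c, A (a, b) (c, d) * σ c a

lemma IsHermitian.partialTraceRight {A : Matrix (n × m) (n × m) ℂ} (hA : A.IsHermitian)
    {σ : Matrix m m ℂ} (hσ : σ.IsHermitian) : (partialTraceRight A σ).IsHermitian := by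
  ext a c
  simp only [Matrix.partialTraceRight, conjTranspose_apply, of_apply, star_sum, star_mul']
  rw [Finset.sum_comm]
  refine Finset.sum_congr rfl fun d _ => Finset.sum_congr rfl fun b _ => ?_
  rw [← conjTranspose_apply A, ← conjTranspose_apply σ, hA.eq, hσ.eq]

variable [Fintype n]

lemma PosSemidef.trace_mul_nonneg {A B : Matrix n n ℂ} (hA : A.PosSemidef) (hB : B.PosSemidef) :
    0 ≤ (A * B).trace := by
  classical
  obtain ⟨X, rfl⟩ : ∃ X : Matrix n n ℂ, A = Xᴴ * X := by
    open scoped MatrixOrder in exact CStarAlgebra.nonneg_iff_eq_star_mul_self.mp hA.nonneg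
  rw [Matrix.mul_assoc, trace_mul_comm]
  exact (hB.mul_mul_conjTranspose_same X).trace_nonneg

lemma trace_mul_kronecker_eq_trace_partialTraceRight_mul (A : Matrix (n × m) (n × m) ℂ)
    (ρ : Matrix n n ℂ) (σ : Matrix m m ℂ) :
    (A * (ρ ⊗ₖ σ)).trace = (partialTraceRight A σ * ρ).trace := by
  simp only [partialTraceRight, trace, diag, mul_apply, of_apply, kroneckerMap_apply,
    Fintype.sum_prod_type, Finset.sum_mul]
  refine Finset.sum_congr rfl fun a _ => ?_
  rw [Finset.sum_comm]
  exact Finset.sum_congr rfl fun c _ => Finset.sum_congr rfl fun b _ =>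
    Finset.sum_congr rfl fun d _ => by ring

lemma trace_mul_kronecker_eq_trace_partialTraceLeft_mul (A : Matrix (m × n) (m × n) ℂ)
    (σ : Matrix m m ℂ) (ρ : Matrix n n ℂ) :
    (A * (σ ⊗ₖ ρ)).trace = (partialTraceLeft A σ * ρ).trace := by
  simp only [partialTraceLeft, trace, diag, mul_apply, of_apply, kroneckerMap_apply,
    Fintype.sum_prod_type, Finset.sum_mul]
  rw [Finset.sum_comm]
  refine Finset.sum_congr rfl fun b _ => ?_
  conv_rhs => rw [Finset.sum_comm]
  refine Finset.sum_congr rfl fun a _ => ?_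
  rw [Finset.sum_comm]
  exact Finset.sum_congr rfl fun d _ => Finset.sum_congr rfl fun c _ => by ring

/-- The quadratic form of `Tr₂[A (1 ⊗ σ)]` at `v` is `Tr[A (v v† ⊗ σ)]`. -/
lemma PosSemidef.partialTraceRight {A : Matrix (n × m) (n × m) ℂ} (hA : A.PosSemidef)
    {σ : Matrix m m ℂ} (hσ : σ.PosSemidef) : (partialTraceRight A σ).PosSemidef := by
  refine .of_dotProduct_mulVec_nonneg (hA.1.partialTraceRight hσ.1) fun v => ?_
  have h := hA.trace_mul_nonneg ((posSemidef_vecMulVec_self_star v).kronecker hσ)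
  rwa [trace_mul_kronecker_eq_trace_partialTraceRight_mul, mul_vecMulVec, trace_vecMulVec,
    dotProduct_comm] at h

lemma PosSemidef.partialTraceLeft {A : Matrix (m × n) (m × n) ℂ} (hA : A.PosSemidef)
    {σ : Matrix m m ℂ} (hσ : σ.PosSemidef) : (partialTraceLeft A σ).PosSemidef :=
  (hA.submatrix Prod.swap).partialTraceRight hσ

variable [DecidableEq n] {U V : Matrix n n ℂ}

lemma trace_transpose_conj_mul_transpose_conj (hU : Uᴴ * U = 1) (ρ M : Matrix n n ℂ) :
    ((U * ρ * Uᴴ)ᵀ * (U * M * Uᴴ)ᵀ).trace = (M * ρ).trace := by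
  have hconj : U * M * Uᴴ * (U * ρ * Uᴴ) = U * (M * ρ) * Uᴴ := by
    simp only [Matrix.mul_assoc]
    rw [← Matrix.mul_assoc Uᴴ U, hU, Matrix.one_mul]
  rw [← transpose_mul, trace_transpose, hconj, trace_mul_cycle, hU, Matrix.one_mul]

lemma trace_sum_smul_kronecker_mul_kronecker {ι κ : Type*} [Fintype ι] [Fintype κ]
    (hU : Uᴴ * U = 1) (hV : Vᴴ * V = 1) (c : ι → κ → ℂ)
    (τ : ι → Matrix n n ℂ) (ω : κ → Matrix n n ℂ) (M N : Matrix n n ℂ) :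
    ((∑ s, ∑ t, c s t • ((U * τ s * Uᴴ)ᵀ ⊗ₖ (V * ω t * Vᴴ)ᵀ)) *
        ((U * M * Uᴴ)ᵀ ⊗ₖ (V * N * Vᴴ)ᵀ)).trace =
      ∑ s, ∑ t, c s t * ((M * τ s).trace * (N * ω t).trace) := by
  simp only [Matrix.sum_mul, Matrix.smul_mul, trace_sum, trace_smul, smul_eq_mul,
    ← mul_kronecker_mul, trace_kronecker, trace_transpose_conj_mul_transpose_conj hU,
    trace_transpose_conj_mul_transpose_conj hV]

end Matrix

lemma mMat_conjTranspose_mul_self (i : Fin 4) : (mMat i)ᴴ * mMat i = 1 := by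
  fin_cases i <;> ext a b <;> fin_cases a <;> fin_cases b <;>
    simp [mMat, σx, σz, mul_apply, Fin.sum_univ_two, one_apply, conjTranspose_apply]

lemma bigState_sum {ι : Type*} [Fintype ι] (τ ω : Matrix (Fin 2) (Fin 2) ℂ) (c : ι → ℂ)
    (σ : ι → Matrix (Fin 2 × Fin 2) (Fin 2 × Fin 2) ℂ) :
    bigState τ ω (∑ x, c x • σ x) = ∑ x, c x • bigState τ ω (σ x) := by
  ext p q
  simp only [bigState, Matrix.sum_apply, Matrix.smul_apply, smul_eq_mul, Finset.sum_mul,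
    Finset.mul_sum]
  exact Finset.sum_congr rfl fun x _ => by ring

lemma bigState_kronecker (τ ω σA σB : Matrix (Fin 2) (Fin 2) ℂ) :
    bigState τ ω (σA ⊗ₖ σB) = (τ ⊗ₖ σA) ⊗ₖ (σB ⊗ₖ ω) := by
  ext p q
  simp only [bigState, kroneckerMap_apply]
  ring

lemma trace_kronecker_mul_bigState_sum {ι : Type*} [Fintype ι]
    (A B : Matrix (Fin 2 × Fin 2) (Fin 2 × Fin 2) ℂ) (τ ω : Matrix (Fin 2) (Fin 2) ℂ)
    (c : ι → ℂ) (σA σB : ι → Matrix (Fin 2) (Fin 2) ℂ) :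
    ((A ⊗ₖ B) * bigState τ ω (∑ x, c x • (σA x ⊗ₖ σB x))).trace =
      ∑ x, c x * ((partialTraceRight A (σA x) * τ).trace *
        (partialTraceLeft B (σB x) * ω).trace) := by
  simp only [bigState_sum, bigState_kronecker, Matrix.mul_sum, Matrix.mul_smul, trace_sum,
    trace_smul, smul_eq_mul, ← mul_kronecker_mul, trace_kronecker,
    trace_mul_kronecker_eq_trace_partialTraceRight_mul A,
    trace_mul_kronecker_eq_trace_partialTraceLeft_mul B]

theorem stmt5_general (W : Matrix (Fin 2 × Fin 2) (Fin 2 × Fin 2) ℂ)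
    (τ ω : Fin 4 → Matrix (Fin 2) (Fin 2) ℂ)
    (β : Fin 4 → Fin 4 → Fin 4 → Fin 4 → ℝ)  -- β i j s t
    (hdec : ∀ i j : Fin 4,
      W = ∑ s : Fin 4, ∑ t : Fin 4, (β i j s t : ℂ) •
        ((mMat i * τ s * (mMat i)ᴴ)ᵀ ⊗ₖ (mMat j * ω t * (mMat j)ᴴ)ᵀ))
    (hWsep : ∀ α γ : Matrix (Fin 2) (Fin 2) ℂ,
      α.PosSemidef → γ.PosSemidef → 0 ≤ (W * (α ⊗ₖ γ)).trace)
    (A B : Fin 4 → Matrix (Fin 2 × Fin 2) (Fin 2 × Fin 2) ℂ)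
    (hA : ∀ i, (A i).PosSemidef)
    (hB : ∀ j, (B j).PosSemidef)
    (n : ℕ) (p : Fin n → ℝ) (hp : ∀ x, 0 ≤ p x)
    (σA σB : Fin n → Matrix (Fin 2) (Fin 2) ℂ)
    (hσA : ∀ x, IsDensity (σA x)) (hσB : ∀ x, IsDensity (σB x)) :
    0 ≤ ∑ s : Fin 4, ∑ t : Fin 4, ∑ i : Fin 4, ∑ j : Fin 4, (β i j s t : ℂ) *
      ((A i ⊗ₖ B j) *
        bigState (τ s) (ω t) (∑ x, (p x : ℂ) • (σA x ⊗ₖ σB x))).trace := by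
  set M := fun i x => partialTraceRight (A i) (σA x)
  set N := fun j x => partialTraceLeft (B j) (σB x)
  have hwitness : ∀ x i j,
      (W * ((mMat i * M i x * (mMat i)ᴴ)ᵀ ⊗ₖ (mMat j * N j x * (mMat j)ᴴ)ᵀ)).trace =
        ∑ s, ∑ t, (β i j s t : ℂ) * ((M i x * τ s).trace * (N j x * ω t).trace) := by
    intro x i j
    rw [hdec i j]
    exact trace_sum_smul_kronecker_mul_kronecker (mMat_conjTranspose_mul_self i)
      (mMat_conjTranspose_mul_self j) _ _ _ _ _
  calc (0 : ℂ) ≤ ∑ x, (p x : ℂ) * ∑ i, ∑ j,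
        (W * ((mMat i * M i x * (mMat i)ᴴ)ᵀ ⊗ₖ (mMat j * N j x * (mMat j)ᴴ)ᵀ)).trace := by
        refine Finset.sum_nonneg fun x _ => mul_nonneg (mod_cast hp x) ?_
        refine Finset.sum_nonneg fun i _ => Finset.sum_nonneg fun j _ => hWsep _ _ ?_ ?_
        · exact (((hA i).partialTraceRight (hσA x).1).mul_mul_conjTranspose_same _).transpose
        · exact (((hB j).partialTraceLeft (hσB x).1).mul_mul_conjTranspose_same _).transpose
    _ = _ := by
        simp only [hwitness, trace_kronecker_mul_bigState_sum, Finset.mul_sum,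
          ← Fintype.sum_prod_type']
        exact Fintype.sum_equiv ⟨fun ⟨x, i, j, s, t⟩ => (s, t, i, j, x),
          fun ⟨s, t, i, j, x⟩ => (x, i, j, s, t), fun _ => rfl, fun _ => rfl⟩ _ _
          fun _ => by dsimp only [Equiv.coe_fn_mk]; ring

/-- If `W` admits, for each pair of Bell outcomes (i,j), a decomposition
`W = ∑_{s,t} β^{i,j}_{s,t} (m_i τ_s m_i†)ᵀ ⊗ (m_j ω_t m_j†)ᵀ`, and
`Tr[W (α ⊗ β)] ≥ 0` for all positive semidefinite α, β, then the MDIEW value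
`I(σ_AB) = ∑_{s,t,i,j} β^{i,j}_{s,t} Tr[(A_i ⊗ B_j)(τ_s ⊗ σ_AB ⊗ ω_t)]` is
nonnegative for every separable state σ_AB and arbitrary POVMs {A_i}, {B_j}. -/
theorem stmt5 (W : Matrix (Fin 2 × Fin 2) (Fin 2 × Fin 2) ℂ) (hW : W.IsHermitian)
    (τ ω : Fin 4 → Matrix (Fin 2) (Fin 2) ℂ)
    (hτ : ∀ s, IsDensity (τ s)) (hω : ∀ t, IsDensity (ω t))
    (β : Fin 4 → Fin 4 → Fin 4 → Fin 4 → ℝ)  -- β i j s t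
    (hdec : ∀ i j : Fin 4,
      W = ∑ s : Fin 4, ∑ t : Fin 4, (β i j s t : ℂ) •
        ((mMat i * τ s * (mMat i)ᴴ)ᵀ ⊗ₖ (mMat j * ω t * (mMat j)ᴴ)ᵀ))
    (hWsep : ∀ α γ : Matrix (Fin 2) (Fin 2) ℂ,
      α.PosSemidef → γ.PosSemidef → 0 ≤ (W * (α ⊗ₖ γ)).trace)
    (A B : Fin 4 → Matrix (Fin 2 × Fin 2) (Fin 2 × Fin 2) ℂ)
    (hA : ∀ i, (A i).PosSemidef) (hAsum : ∑ i : Fin 4, A i = 1)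
    (hB : ∀ j, (B j).PosSemidef) (hBsum : ∑ j : Fin 4, B j = 1)
    (n : ℕ) (p : Fin n → ℝ) (hp : ∀ x, 0 ≤ p x) (hp1 : ∑ x, p x = 1)
    (σA σB : Fin n → Matrix (Fin 2) (Fin 2) ℂ)
    (hσA : ∀ x, IsDensity (σA x)) (hσB : ∀ x, IsDensity (σB x)) :
    0 ≤ ∑ s : Fin 4, ∑ t : Fin 4, ∑ i : Fin 4, ∑ j : Fin 4, (β i j s t : ℂ) *
      ((A i ⊗ₖ B j) *
        bigState (τ s) (ω t) (∑ x, (p x : ℂ) • (σA x ⊗ₖ σB x))).trace :=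
  stmt5_general W τ ω β hdec hWsep A B hA hB n p hp σA σB hσA hσB
end
end

section
/- Let W be a Hermitian operator on (ℂ²)^{⊗N} admitting, for each tuple (i_1,…,i_N) ∈ {1,2,3,4}^N, a decomposition W = ∑_{x_1,…,x_N} β^{i_1,…,i_N}_{x_1,…,x_N} (m_{i_1} τ_{1,x_1} m_{i_1}†)ᵀ ⊗ ⋯ ⊗ (m_{i_N} τ_{N,x_N} m_{i_N}†)ᵀ, where m_1=I, m_2=σ_z, m_3=σ_x, m_4=σ_xσ_z and the τ_{k,x_k} are density matrices. If the measurement of each party k is the ideal Bell-state measurement with outcome projectors m_{i_k}|φ⁺⟩⟨φ⁺|m_{i_k}† ⊗-placed on party k's ancilla and system, then I(ρ) = ∑_{i_1,…,i_N, x_1,…,x_N} β^{i_1,…,i_N}_{x_1,…,x_N} P(i_1,…,i_N | τ_{1,x_1},…,τ_{N,x_N}) = 2^N Tr[W ρ] for every state ρ on (ℂ²)^{⊗N}. -/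
/-!
Since `(1 ⊗ m)|φ⁺⟩ = vec m / √2`, the Bell projector for the outcome tuple `i` is
`2⁻ᴺ |vec M⟩⟨vec M|` with `M = ⊗ₖ m_{i_k}`, a real matrix. The identity
`(T ⊗ ρ)ᵀ vec M = vec (ρᵀ M T)` turns `Tr[|vec M⟩⟨vec M| (T ⊗ ρ)]` into `Tr[(M T Mᵀ)ᵀ ρ]`,
so for each `i` the decomposition of `W` gives `∑ₓ β^i_x P(i | τ_x) = 2⁻ᴺ Tr[W ρ]`;
summing over the `4ᴺ` outcomes gives `2ᴺ Tr[W ρ]`.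
-/

open Matrix Kronecker ComplexOrder

noncomputable section

/-- |φ⁺⟩ = (|00⟩+|11⟩)/√2. -/
def bellPhiPlus : Fin 2 × Fin 2 → ℂ :=
  fun p => if p.1 = p.2 then ((Real.sqrt 2 : ℂ))⁻¹ else 0

/-- The Bell-outcome projector m_i|φ⁺⟩⟨φ⁺|m_i† (with m_i on the second factor). -/
def bellOutcome (i : Fin 4) : Matrix (Fin 2 × Fin 2) (Fin 2 × Fin 2) ℂ :=
  ((1 : Matrix (Fin 2) (Fin 2) ℂ) ⊗ₖ mMat i) *
    vecMulVec bellPhiPlus (star bellPhiPlus) *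
    ((1 : Matrix (Fin 2) (Fin 2) ℂ) ⊗ₖ mMat i)ᴴ

/-- N-fold tensor product of single-qubit matrices, on the index type `Fin N → Fin 2`. -/
def tensorN (N : ℕ) (A : Fin N → Matrix (Fin 2) (Fin 2) ℂ) :
    Matrix (Fin N → Fin 2) (Fin N → Fin 2) ℂ :=
  fun f g => ∏ k, A k (f k) (g k)

/-- The state (⊗ₖ τ_k) ⊗ ρ, on (ancillas) × (systems). -/
def bigStateN (N : ℕ) (τin : Fin N → Matrix (Fin 2) (Fin 2) ℂ)
    (ρ : Matrix (Fin N → Fin 2) (Fin N → Fin 2) ℂ) :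
    Matrix ((Fin N → Fin 2) × (Fin N → Fin 2)) ((Fin N → Fin 2) × (Fin N → Fin 2)) ℂ :=
  fun p q => (∏ k, τin k (p.1 k) (q.1 k)) * ρ p.2 q.2

/-- The ideal Bell measurement operator for outcome tuple i: the k-th Bell
projector acts on the k-th ancilla and the k-th system. -/
def measN (N : ℕ) (i : Fin N → Fin 4) :
    Matrix ((Fin N → Fin 2) × (Fin N → Fin 2)) ((Fin N → Fin 2) × (Fin N → Fin 2)) ℂ :=
  fun p q => ∏ k, bellOutcome (i k) (p.1 k, p.2 k) (q.1 k, q.2 k)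


lemma trace_vecMulVec_vec_mul_kronecker {n R : Type*} [Fintype n] [CommSemiring R]
    (M T ρ : Matrix n n R) :
    (vecMulVec (vec M) (vec M) * (T ⊗ₖ ρ)).trace = ((M * T * Mᵀ)ᵀ * ρ).trace := by
  rw [vecMulVec_mul, vec_vecMul_kronecker, trace_vecMulVec, vec_dotProduct_vec,
    ← trace_transpose]
  simp only [transpose_mul, transpose_transpose, ← Matrix.mul_assoc]
  rw [trace_mul_comm]
  simp only [Matrix.mul_assoc]

lemma tensorN_mul (N : ℕ) (A B : Fin N → Matrix (Fin 2) (Fin 2) ℂ) :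
    tensorN N (fun k => A k * B k) = tensorN N A * tensorN N B := by
  ext f g
  simp only [tensorN, mul_apply, Fintype.prod_sum, ← Finset.prod_mul_distrib]

lemma tensorN_transpose (N : ℕ) (A : Fin N → Matrix (Fin 2) (Fin 2) ℂ) :
    tensorN N (fun k => (A k)ᵀ) = (tensorN N A)ᵀ :=
  rfl

lemma conj_mMat_apply (i : Fin 4) (a b : Fin 2) : starRingEnd ℂ (mMat i a b) = mMat i a b := by
  fin_cases i <;> fin_cases a <;> fin_cases b <;> simp [mMat, σx, σz]

lemma conjTranspose_mMat (i : Fin 4) : (mMat i)ᴴ = (mMat i)ᵀ := by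
  ext a b
  exact conj_mMat_apply i b a

lemma bellOutcome_apply (i : Fin 4) (a b c d : Fin 2) :
    bellOutcome i (a, b) (c, d) = 2⁻¹ * (mMat i b a * mMat i d c) := by
  have h_sqrt : ((Real.sqrt 2 : ℂ))⁻¹ * ((Real.sqrt 2 : ℂ))⁻¹ = (2:ℂ)⁻¹ := by
    rw [← mul_inv, ← Complex.ofReal_mul, Real.mul_self_sqrt zero_le_two, Complex.ofReal_ofNat]
  simp only [bellOutcome, mul_apply, Fintype.sum_prod_type, kroneckerMap_apply,
    conjTranspose_apply, one_apply, vecMulVec_apply, bellPhiPlus, Pi.star_apply, RCLike.star_def]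
  simp only [ite_mul, one_mul, zero_mul, apply_ite, map_inv₀, Complex.conj_ofReal, map_zero,
    h_sqrt, mul_zero, Finset.sum_ite_irrel, Finset.sum_ite_eq, Finset.mem_univ, ↓reduceIte,
    Finset.sum_const_zero, conj_mMat_apply]
  ring

lemma measN_eq_smul_vecMulVec (N : ℕ) (i : Fin N → Fin 4) :
    measN N i = ((2:ℂ) ^ N)⁻¹ •
      vecMulVec (vec (tensorN N fun k => mMat (i k))) (vec (tensorN N fun k => mMat (i k))) := by
  ext ⟨a, b⟩ ⟨c, d⟩
  simp only [measN, bellOutcome_apply, Finset.prod_mul_distrib, Finset.prod_const,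
    Finset.card_univ, Fintype.card_fin, inv_pow, Matrix.smul_apply, vecMulVec_apply, vec, tensorN,
    smul_eq_mul]

lemma bigStateN_eq_kronecker (N : ℕ) (τin : Fin N → Matrix (Fin 2) (Fin 2) ℂ)
    (ρ : Matrix (Fin N → Fin 2) (Fin N → Fin 2) ℂ) :
    bigStateN N τin ρ = tensorN N τin ⊗ₖ ρ :=
  rfl

lemma trace_measN_mul_bigStateN (N : ℕ) (i : Fin N → Fin 4)
    (τin : Fin N → Matrix (Fin 2) (Fin 2) ℂ) (ρ : Matrix (Fin N → Fin 2) (Fin N → Fin 2) ℂ) :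
    (measN N i * bigStateN N τin ρ).trace
      = ((2:ℂ) ^ N)⁻¹ * (tensorN N (fun k => (mMat (i k) * τin k * (mMat (i k))ᴴ)ᵀ) * ρ).trace := by
  rw [measN_eq_smul_vecMulVec, bigStateN_eq_kronecker, smul_mul_assoc, trace_smul,
    trace_vecMulVec_vec_mul_kronecker, smul_eq_mul]
  simp only [conjTranspose_mMat, tensorN_transpose, tensorN_mul]

theorem stmt7_general (N : ℕ) (W : Matrix (Fin N → Fin 2) (Fin N → Fin 2) ℂ)
    (τ : Fin N → Fin 4 → Matrix (Fin 2) (Fin 2) ℂ)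
    (β : (Fin N → Fin 4) → (Fin N → Fin 4) → ℝ)  -- β i x
    (hdec : ∀ i : Fin N → Fin 4,
      W = ∑ x : Fin N → Fin 4, (β i x : ℂ) •
        tensorN N (fun k => (mMat (i k) * τ k (x k) * (mMat (i k))ᴴ)ᵀ))
    (ρ : Matrix (Fin N → Fin 2) (Fin N → Fin 2) ℂ) :
    ∑ i : Fin N → Fin 4, ∑ x : Fin N → Fin 4, (β i x : ℂ) *
        (measN N i * bigStateN N (fun k => τ k (x k)) ρ).trace
      = (2 ^ N : ℂ) * (W * ρ).trace := by
  have h_each : ∀ i : Fin N → Fin 4, ∑ x : Fin N → Fin 4, (β i x : ℂ) *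
      (measN N i * bigStateN N (fun k => τ k (x k)) ρ).trace = ((2:ℂ) ^ N)⁻¹ * (W * ρ).trace := by
    intro i
    rw [hdec i, Finset.sum_mul, trace_sum, Finset.mul_sum]
    refine Finset.sum_congr rfl fun x _ => ?_
    rw [trace_measN_mul_bigStateN, smul_mul_assoc, trace_smul, smul_eq_mul, mul_left_comm]
  have h_card : (Fintype.card (Fin N → Fin 4) : ℂ) = 2 ^ N * 2 ^ N := by
    rw [Fintype.card_fun, Fintype.card_fin, Fintype.card_fin, Nat.cast_pow, ← mul_pow]
    norm_num
  rw [Finset.sum_congr rfl fun i _ => h_each i, Finset.sum_const, Finset.card_univ, nsmul_eq_mul,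
    h_card]
  field_simp

/-- If `W = ∑_x β^i_x ⊗_k (m_{i_k} τ_{k,x_k} m_{i_k}†)ᵀ` for every outcome tuple i,
then with ideal Bell measurements the MDIEW value equals `2^N Tr[W ρ]`. -/
theorem stmt7 (N : ℕ) (W : Matrix (Fin N → Fin 2) (Fin N → Fin 2) ℂ)
    (hW : W.IsHermitian)
    (τ : Fin N → Fin 4 → Matrix (Fin 2) (Fin 2) ℂ)
    (hτ : ∀ k x, IsDensity (τ k x))
    (β : (Fin N → Fin 4) → (Fin N → Fin 4) → ℝ)  -- β i x
    (hdec : ∀ i : Fin N → Fin 4,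
      W = ∑ x : Fin N → Fin 4, (β i x : ℂ) •
        tensorN N (fun k => (mMat (i k) * τ k (x k) * (mMat (i k))ᴴ)ᵀ))
    (ρ : Matrix (Fin N → Fin 2) (Fin N → Fin 2) ℂ) (hρ : IsDensity ρ) :
    ∑ i : Fin N → Fin 4, ∑ x : Fin N → Fin 4, (β i x : ℂ) *
        (measN N i * bigStateN N (fun k => τ k (x k)) ρ).trace
      = (2 ^ N : ℂ) * (W * ρ).trace :=
  stmt7_general N W τ β hdec ρ
end
end

section
/- Define a pure state |φ⟩ on (ℂ²)^{⊗N} to be k-producible if it factors as a tensor product of pure states each supported on at most k of the N parties, and a mixed state to be k-producible if it is a convex combination of k-producible pure states. Then for positive semidefinite operators M_1, …, M_N with M_j acting on ancilla⊗system of party j, the map 𝓜(ρ) = Tr_ρ[(M_1 ⊗ ⋯ ⊗ M_N)(I ⊗ ρ)] sends every k-producible state ρ to a nonnegative multiple of a k-producible state (on the ancilla spaces). -/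
open Matrix ComplexOrder

noncomputable section

/-- A k-producible state on N qubits: a convex combination of states, each of
which is a tensor product (over the blocks of a partition `π x` of the parties)
of density matrices supported on at most k parties. -/
def IsKProducibleState (N k : ℕ) (ρ : Matrix (Fin N → Fin 2) (Fin N → Fin 2) ℂ) : Prop :=
  ∃ (n : ℕ) (p : Fin n → ℝ) (π : Fin n → Fin N → Fin N)
    (σ : (x : Fin n) → (b : Fin N) →
      Matrix ({j // π x j = b} → Fin 2) ({j // π x j = b} → Fin 2) ℂ),
    (∀ x, 0 ≤ p x) ∧ (∑ x, p x = 1) ∧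
    (∀ x b, Fintype.card {j // π x j = b} ≤ k) ∧
    (∀ x b, (σ x b).PosSemidef ∧ (σ x b).trace = 1) ∧
    ρ = fun f g => ∑ x, (p x : ℂ) *
      ∏ b, σ x b (fun j => f j.1) (fun j => g j.1)

/-!
The map acts party by party, so on a tensor product of block states it factors into the tensor
product of its restrictions to the blocks. Each restriction sends a state to a positive
semidefinite matrix (a compression of the Hadamard product of `⊗ⱼ Mⱼ` with `I ⊗ σᵀ`), which is a
nonnegative multiple of a state on the same block. Collecting these scalars turns a convex
combination of k-producible products into a nonnegative combination of k-producible products,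
which normalizes to a nonnegative multiple of a k-producible state.
-/

open Finset

namespace Matrix

section PosSemidef

variable {𝕜 : Type*} [RCLike 𝕜]

theorem posSemidef_prod_hadamard {ι n : Type*} [Finite n] (s : Finset ι) {A : ι → Matrix n n 𝕜}
    (hA : ∀ i ∈ s, (A i).PosSemidef) : (of fun p q => ∏ i ∈ s, A i p q).PosSemidef := by
  classical
  induction s using Finset.induction_on with
  | empty => simpa [vecMulVec] using posSemidef_vecMulVec_self_star (1 : n → 𝕜)
  | insert i s hi ih =>
    simp_rw [prod_insert hi]
    exact (hA i (mem_insert_self i s)).hadamard (ih fun j hj => hA j (mem_insert_of_mem hj))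

theorem PosSemidef.sum_sum_apply {α β : Type*} [Fintype α] [Fintype β] [DecidableEq α]
    {X : Matrix (α × β) (α × β) 𝕜} (hX : X.PosSemidef) :
    (of fun u v => ∑ s, ∑ t, X (u, s) (v, t)).PosSemidef := by
  convert hX.conjTranspose_mul_mul_same
    (of fun p v => if p.1 = v then 1 else 0 : Matrix (α × β) α 𝕜)
  ext u v
  simp only [mul_apply, Fintype.sum_prod_type, of_apply, conjTranspose_apply, mul_ite, mul_one,
    mul_zero]
  rw [Finset.sum_comm]
  simp

theorem PosSemidef.exists_eq_smul_density {n : Type*} [Fintype n] [DecidableEq n] [Nonempty n]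
    {A : Matrix n n 𝕜} (hA : A.PosSemidef) :
    ∃ c : ℝ, 0 ≤ c ∧ ∃ σ : Matrix n n 𝕜, (σ.PosSemidef ∧ σ.trace = 1) ∧ A = (c : 𝕜) • σ := by
  obtain ⟨c, hc, htr⟩ := RCLike.nonneg_iff_exists_ofReal.mp hA.trace_nonneg
  refine ⟨c, hc, ?_⟩
  rcases hc.eq_or_lt with rfl | hc
  · obtain ⟨i⟩ := ‹Nonempty n›
    refine ⟨diagonal (Pi.single i 1), ⟨PosSemidef.diagonal (Pi.single_nonneg.mpr zero_le_one),
      by simp [trace_diagonal]⟩, ?_⟩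
    rw [hA.trace_eq_zero_iff.mp (by simpa using htr.symm), RCLike.ofReal_zero, zero_smul]
  · have hc' : (c : 𝕜) ≠ 0 := RCLike.ofReal_ne_zero.mpr hc.ne'
    refine ⟨(c : 𝕜)⁻¹ • A, ⟨hA.smul (inv_nonneg.mpr (RCLike.ofReal_nonneg.mpr hc.le)), ?_⟩, ?_⟩
    · rw [trace_smul, ← htr, smul_eq_mul, inv_mul_cancel₀ hc']
    · rw [smul_smul, mul_inv_cancel₀ hc', one_smul]

end PosSemidef

end Matrix

def Equiv.piFiberEquiv {ι β κ : Type*} (π : ι → κ) :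
    (ι → β) ≃ ((b : κ) → {j // π j = b} → β) where
  toFun s _ j := s j
  invFun S j := S (π j) ⟨j, rfl⟩
  left_inv _ := rfl
  right_inv S := by
    ext b ⟨j, rfl⟩
    rfl

section AncillaMap

variable {R : Type*} [CommSemiring R] {ι α β κ : Type*} [Fintype κ]

def blockTensor (π : ι → κ)
    (σ : (b : κ) → Matrix ({j // π j = b} → β) ({j // π j = b} → β) R) :
    Matrix (ι → β) (ι → β) R :=
  of fun f g => ∏ b, σ b (fun j => f j) (fun j => g j)

theorem blockTensor_smul (π : ι → κ) (c : κ → R)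
    (σ : (b : κ) → Matrix ({j // π j = b} → β) ({j // π j = b} → β) R) :
    blockTensor π (fun b => c b • σ b) = (∏ b, c b) • blockTensor π σ := by
  ext f g
  simp [blockTensor, prod_mul_distrib]

variable [Fintype ι] [DecidableEq ι] [Fintype β]

/-- `σ ↦ Tr_β[(⊗ⱼ Mⱼ)(I ⊗ σ)]`, where party `j` has ancilla space `α` and system space `β`. -/
def ancillaMap (M : ι → Matrix (α × β) (α × β) R) :
    Matrix (ι → β) (ι → β) R →ₗ[R] Matrix (ι → α) (ι → α) R where
  toFun σ := of fun u v => ∑ s, ∑ t, (∏ j, M j (u j, s j) (v j, t j)) * σ t s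
  map_add' σ τ := by ext; simp [mul_add, sum_add_distrib]
  map_smul' c σ := by ext; simp [mul_sum, mul_left_comm]

theorem ancillaMap_apply (M : ι → Matrix (α × β) (α × β) R) (σ : Matrix (ι → β) (ι → β) R)
    (u v : ι → α) :
    ancillaMap M σ u v = ∑ s, ∑ t, (∏ j, M j (u j, s j) (v j, t j)) * σ t s := rfl

theorem Matrix.PosSemidef.ancillaMap {𝕜 : Type*} [RCLike 𝕜] [Fintype α] [DecidableEq α]
    {M : ι → Matrix (α × β) (α × β) 𝕜} (hM : ∀ j, (M j).PosSemidef)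
    {σ : Matrix (ι → β) (ι → β) 𝕜} (hσ : σ.PosSemidef) : (ancillaMap M σ).PosSemidef := by
  have hprod : (of fun p q : (ι → α) × (ι → β) =>
      ∏ j, M j (p.1 j, p.2 j) (q.1 j, q.2 j)).PosSemidef :=
    posSemidef_prod_hadamard univ fun j _ =>
      (hM j).submatrix fun p : (ι → α) × (ι → β) => (p.1 j, p.2 j)
  exact (hprod.hadamard (hσ.transpose.submatrix Prod.snd)).sum_sum_apply

theorem ancillaMap_blockTensor [DecidableEq κ] (M : ι → Matrix (α × β) (α × β) R) (π : ι → κ)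
    (σ : (b : κ) → Matrix ({j // π j = b} → β) ({j // π j = b} → β) R) :
    ancillaMap M (blockTensor π σ) =
      blockTensor π fun b => ancillaMap (fun j : {j // π j = b} => M j) (σ b) := by
  ext u v
  simp only [blockTensor, ancillaMap_apply, of_apply, Fintype.prod_sum]
  refine Fintype.sum_equiv (Equiv.piFiberEquiv π) _ _ fun s =>
    Fintype.sum_equiv (Equiv.piFiberEquiv π) _ _ fun t => ?_
  rw [← Fintype.prod_fiberwise π, ← prod_mul_distrib]
  rfl

end AncillaMap

theorem isKProducibleState_iff {N k : ℕ} {ρ : Matrix (Fin N → Fin 2) (Fin N → Fin 2) ℂ} :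
    IsKProducibleState N k ρ ↔
      ∃ (n : ℕ) (p : Fin n → ℝ) (π : Fin n → Fin N → Fin N)
        (σ : (x : Fin n) → (b : Fin N) →
          Matrix ({j // π x j = b} → Fin 2) ({j // π x j = b} → Fin 2) ℂ),
        (∀ x, 0 ≤ p x) ∧ (∑ x, p x = 1) ∧
        (∀ x b, Fintype.card {j // π x j = b} ≤ k) ∧
        (∀ x b, (σ x b).PosSemidef ∧ (σ x b).trace = 1) ∧
        ρ = ∑ x, (p x : ℂ) • blockTensor (π x) (σ x) := by
  have hsum : ∀ (n : ℕ) (p : Fin n → ℝ) (π : Fin n → Fin N → Fin N)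
      (σ : (x : Fin n) → (b : Fin N) →
        Matrix ({j // π x j = b} → Fin 2) ({j // π x j = b} → Fin 2) ℂ),
      ∑ x, (p x : ℂ) • blockTensor (π x) (σ x) =
        fun f g => ∑ x, (p x : ℂ) * ∏ b, σ x b (fun j => f j.1) (fun j => g j.1) := by
    intro n p π σ
    ext f g
    simp [blockTensor, Matrix.sum_apply]
  simp only [IsKProducibleState, hsum]

/-- The map 𝓜(ρ) = Tr_ρ[(M₁ ⊗ ⋯ ⊗ M_N)(I ⊗ ρ)], where `M j` is a positive
semidefinite operator on the ancilla qubit and system qubit of party `j`,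
sends every k-producible state to a nonnegative multiple of a k-producible
state on the ancilla spaces. -/
theorem stmt9 (N k : ℕ) (M : Fin N → Matrix (Fin 2 × Fin 2) (Fin 2 × Fin 2) ℂ)
    (hM : ∀ j, (M j).PosSemidef)
    (ρ : Matrix (Fin N → Fin 2) (Fin N → Fin 2) ℂ)
    (hρ : IsKProducibleState N k ρ) :
    ∃ (c : ℝ) (ρ' : Matrix (Fin N → Fin 2) (Fin N → Fin 2) ℂ),
      0 ≤ c ∧ IsKProducibleState N k ρ' ∧
      -- 𝓜(ρ), the partial trace over the system qubits of (⊗ⱼ Mⱼ)(I ⊗ ρ)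
      (fun (u v : Fin N → Fin 2) =>
          ∑ s : Fin N → Fin 2, ∑ t : Fin N → Fin 2,
            (∏ j, M j (u j, s j) (v j, t j)) * ρ t s)
        = (c : ℂ) • ρ' := by
  obtain ⟨n, p, π, σ, hp, hp1, hcard, hσ, rfl⟩ := isKProducibleState_iff.mp hρ
  choose t ht σ' hσ' hτ using fun x b =>
    ((hσ x b).1.ancillaMap fun j : {j // π x j = b} => hM j).exists_eq_smul_density
  set q : Fin n → ℝ := fun x => p x * ∏ b, t x b
  have hq : 0 ≤ q := fun x => mul_nonneg (hp x) (prod_nonneg fun b _ => ht x b)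
  have hMρ : ancillaMap M (∑ x, (p x : ℂ) • blockTensor (π x) (σ x)) =
      ∑ x, (q x : ℂ) • blockTensor (π x) (σ' x) := by
    simp only [map_sum, map_smul, ancillaMap_blockTensor, hτ, blockTensor_smul, smul_smul, q,
      Complex.ofReal_mul, Complex.ofReal_prod]
    rfl
  show ∃ c ρ', _ ∧ _ ∧ ancillaMap M _ = _
  rw [hMρ]
  obtain hc | hc := (Fintype.sum_nonneg hq).eq_or_lt
  · refine ⟨0, _, le_rfl, hρ, ?_⟩
    simp [(Fintype.sum_eq_zero_iff_of_nonneg hq).mp hc.symm]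
  · refine ⟨∑ x, q x, ∑ x, ((q x / ∑ y, q y : ℝ) : ℂ) • blockTensor (π x) (σ' x), hc.le,
      isKProducibleState_iff.mpr ⟨n, _, π, σ', fun x => div_nonneg (hq x) hc.le,
        by rw [← sum_div, div_self hc.ne'], hcard, hσ', rfl⟩, ?_⟩
    rw [smul_sum]
    refine sum_congr rfl fun x _ => ?_
    rw [smul_smul, ← Complex.ofReal_mul, mul_div_cancel₀ _ hc.ne']
end
end

section
/- The maximal squared overlap of the three-qubit W state |ψ_W⟩ = (|001⟩+|010⟩+|100⟩)/√3 with a fully product pure state |a⟩⊗|b⟩⊗|c⟩ equals 4/9; consequently Tr[(4/9 · I₈ − |ψ_W⟩⟨ψ_W|) σ] ≥ 0 for every fully separable three-qubit state σ. -/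
/-!
Writing out `⟨W|a⊗b⊗c⟩ = (a₀b₀c₁ + a₀b₁c₀ + a₁b₀c₀)/√3`, the triangle inequality reduces the
bound to the real amplitudes `‖aᵢ‖, ‖bᵢ‖, ‖cᵢ‖`, where Cauchy–Schwarz in the first qubit and a
sum of two squares in the other two give `|⟨W|a⊗b⊗c⟩|² ≤ 4/9 ‖a‖²‖b‖²‖c‖²`, with equality at
`a = b = c = √(2/3)|0⟩ + √(1/3)|1⟩`. A positive semidefinite `ρᵢ` is a Gram matrix `Bᵢᴴ Bᵢ`, so
`⟨W|ρ₁⊗ρ₂⊗ρ₃|W⟩` is the sum of `|⟨W|u⊗v⊗w⟩|²` over rows `u, v, w` of the `Bᵢ`, hence at most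
`4/9 tr ρ₁ tr ρ₂ tr ρ₃`; separable states are convex combinations of such products.
-/

open Matrix Kronecker ComplexOrder

noncomputable section

/-- The three-qubit W state |ψ_W⟩ = (|001⟩+|010⟩+|100⟩)/√3. -/
def psiW : Fin 2 × Fin 2 × Fin 2 → ℂ :=
  fun t => if t = (0, 0, 1) ∨ t = (0, 1, 0) ∨ t = (1, 0, 0)
           then ((Real.sqrt 3 : ℂ))⁻¹ else 0

/-- Overlap ⟨ψ_W| (a ⊗ b ⊗ c). -/
def ovW (a b c : Fin 2 → ℂ) : ℂ :=
  ∑ t : Fin 2 × Fin 2 × Fin 2,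
    (starRingEnd ℂ) (psiW t) * (a t.1 * b t.2.1 * c t.2.2)

theorem trace_vecMulVec_mul {R n : Type*} [CommSemiring R] [Fintype n] (x y : n → R)
    (M : Matrix n n R) :
    (vecMulVec x y * M).trace = y ⬝ᵥ (M *ᵥ x) := by
  rw [vecMulVec_mul, trace_vecMulVec, dotProduct_comm, dotProduct_mulVec]

theorem star_dotProduct_self {n : Type*} [Fintype n] (v : n → ℂ) :
    star v ⬝ᵥ v = ((∑ i, ‖v i‖ ^ 2 : ℝ) : ℂ) := by
  push_cast
  exact Finset.sum_congr rfl fun i _ => RCLike.conj_mul (v i)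

theorem trace_conjTranspose_mul_self {m n : Type*} [Fintype m] [Fintype n] (B : Matrix m n ℂ) :
    (Bᴴ * B).trace = ((∑ k, ∑ i, ‖B k i‖ ^ 2 : ℝ) : ℂ) := by
  rw [← star_vec_dotProduct_vec, star_dotProduct_self, Fintype.sum_prod_type, Finset.sum_comm]
  rfl

theorem Fintype.sum_prod_mul_mul {R ι₁ ι₂ ι₃ : Type*} [NonUnitalNonAssocSemiring R]
    [Fintype ι₁] [Fintype ι₂] [Fintype ι₃] (f : ι₁ → R) (g : ι₂ → R) (h : ι₃ → R) :
    ∑ k : ι₁ × ι₂ × ι₃, f k.1 * g k.2.1 * h k.2.2 = (∑ i, f i) * (∑ j, g j) * (∑ k, h k) := by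
  simp only [Fintype.sum_prod_type, ← Finset.mul_sum, ← Finset.sum_mul]

theorem sq_wPolynomial_le (α α' β β' γ γ' : ℝ) :
    (α * β * γ' + α * β' * γ + α' * β * γ) ^ 2 ≤
      4 / 3 * ((α ^ 2 + α' ^ 2) * (β ^ 2 + β' ^ 2) * (γ ^ 2 + γ' ^ 2)) := by
  have cauchy_schwarz : (α * (β * γ' + β' * γ) + α' * (β * γ)) ^ 2 ≤
      (α ^ 2 + α' ^ 2) * ((β * γ' + β' * γ) ^ 2 + (β * γ) ^ 2) := by
    nlinarith [sq_nonneg (α * (β * γ) - α' * (β * γ' + β' * γ))]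
  -- `4/3 (β² + β'²)(γ² + γ'²) - (βγ' + β'γ)² - β²γ² = ((βγ - 2β'γ')² + (β'γ - βγ')²) / 3`
  have two_qubit : (β * γ' + β' * γ) ^ 2 + (β * γ) ^ 2 ≤
      4 / 3 * ((β ^ 2 + β' ^ 2) * (γ ^ 2 + γ' ^ 2)) := by
    nlinarith [sq_nonneg (β * γ - 2 * β' * γ'), sq_nonneg (β' * γ - β * γ')]
  nlinarith [add_nonneg (sq_nonneg α) (sq_nonneg α')]

theorem ovW_eq (a b c : Fin 2 → ℂ) :
    ovW a b c = (Real.sqrt 3 : ℂ)⁻¹ * (a 0 * b 0 * c 1 + a 0 * b 1 * c 0 + a 1 * b 0 * c 0) := by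
  simp only [ovW, psiW, Prod.ext_iff, Fintype.sum_prod_type, Fin.sum_univ_two, zero_ne_one,
    one_ne_zero, and_false, and_true, false_or, or_false, or_self, ↓reduceIte, map_zero, map_inv₀,
    Complex.conj_ofReal, zero_mul, add_zero, zero_add]
  ring

theorem norm_ovW_sq_le (a b c : Fin 2 → ℂ) :
    ‖ovW a b c‖ ^ 2 ≤
      4 / 9 * ((∑ i, ‖a i‖ ^ 2) * (∑ i, ‖b i‖ ^ 2) * (∑ i, ‖c i‖ ^ 2)) := by
  have triangle : ‖a 0 * b 0 * c 1 + a 0 * b 1 * c 0 + a 1 * b 0 * c 0‖ ≤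
      ‖a 0‖ * ‖b 0‖ * ‖c 1‖ + ‖a 0‖ * ‖b 1‖ * ‖c 0‖ + ‖a 1‖ * ‖b 0‖ * ‖c 0‖ := by
    simpa only [norm_mul] using norm_add₃_le (a := a 0 * b 0 * c 1) (b := a 0 * b 1 * c 0)
      (c := a 1 * b 0 * c 0)
  have hsqrt3 : ‖(Real.sqrt 3 : ℂ)⁻¹‖ ^ 2 = 1 / 3 := by
    rw [norm_inv, Complex.norm_real, Real.norm_of_nonneg (Real.sqrt_nonneg 3), inv_pow,
      Real.sq_sqrt (by norm_num)]
    norm_num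
  rw [ovW_eq, norm_mul, mul_pow, hsqrt3]
  simp only [Fin.sum_univ_two]
  nlinarith [pow_le_pow_left₀ (norm_nonneg _) triangle 2,
    sq_wPolynomial_le ‖a 0‖ ‖a 1‖ ‖b 0‖ ‖b 1‖ ‖c 0‖ ‖c 1‖]

def wMaximizer : Fin 2 → ℂ := ![(Real.sqrt 2 / Real.sqrt 3 : ℝ), (1 / Real.sqrt 3 : ℝ)]

theorem sum_norm_sq_wMaximizer : ∑ i, ‖wMaximizer i‖ ^ 2 = 1 := by
  simp only [wMaximizer, Fin.sum_univ_two, Matrix.cons_val_zero, Matrix.cons_val_one,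
    Complex.norm_real, Real.norm_eq_abs, sq_abs, div_pow, Real.sq_sqrt zero_le_two,
    Real.sq_sqrt zero_le_three]
  norm_num

theorem ovW_wMaximizer : ovW wMaximizer wMaximizer wMaximizer = 2 / 3 := by
  have h2 : (Real.sqrt 2 : ℂ) ^ 2 = 2 := by exact_mod_cast Real.sq_sqrt zero_le_two
  have h3 : (Real.sqrt 3 : ℂ) ^ 2 = 3 := by exact_mod_cast Real.sq_sqrt zero_le_three
  have h3_ne : (Real.sqrt 3 : ℂ) ≠ 0 := by exact_mod_cast (Real.sqrt_pos.2 three_pos).ne'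
  rw [ovW_eq]
  simp only [wMaximizer, Matrix.cons_val_zero, Matrix.cons_val_one]
  push_cast
  field_simp
  linear_combination 9 * h2 - (2 * (Real.sqrt 3 : ℂ) ^ 2 + 6) * h3

theorem star_psiW : star psiW = psiW := by
  ext t
  simp only [Pi.star_apply, psiW]
  split_ifs <;> simp

theorem kronecker_mulVec_psiW {m₁ m₂ m₃ : Type*} (B₁ : Matrix m₁ (Fin 2) ℂ)
    (B₂ : Matrix m₂ (Fin 2) ℂ) (B₃ : Matrix m₃ (Fin 2) ℂ) (k : m₁ × m₂ × m₃) :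
    ((B₁ ⊗ₖ (B₂ ⊗ₖ B₃)) *ᵥ psiW) k = ovW (B₁ k.1) (B₂ k.2.1) (B₃ k.2.2) := by
  rw [ovW, mulVec, dotProduct]
  refine Finset.sum_congr rfl fun t _ => ?_
  rw [← Complex.star_def, ← Pi.star_apply, star_psiW, kroneckerMap_apply, kroneckerMap_apply]
  ring

theorem psiW_expectation_gram {m₁ m₂ m₃ : Type*} [Fintype m₁] [Fintype m₂] [Fintype m₃]
    (B₁ : Matrix m₁ (Fin 2) ℂ) (B₂ : Matrix m₂ (Fin 2) ℂ) (B₃ : Matrix m₃ (Fin 2) ℂ) :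
    star psiW ⬝ᵥ (((B₁ᴴ * B₁) ⊗ₖ ((B₂ᴴ * B₂) ⊗ₖ (B₃ᴴ * B₃))) *ᵥ psiW) =
      ((∑ k : m₁ × m₂ × m₃, ‖ovW (B₁ k.1) (B₂ k.2.1) (B₃ k.2.2)‖ ^ 2 : ℝ) : ℂ) := by
  set C := B₁ ⊗ₖ (B₂ ⊗ₖ B₃)
  have gram : (B₁ᴴ * B₁) ⊗ₖ ((B₂ᴴ * B₂) ⊗ₖ (B₃ᴴ * B₃)) = Cᴴ * C := by
    rw [mul_kronecker_mul, mul_kronecker_mul, conjTranspose_kronecker, conjTranspose_kronecker]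
  rw [gram, ← mulVec_mulVec, dotProduct_mulVec, vecMul_conjTranspose, star_star,
    star_dotProduct_self]
  simp only [C, kronecker_mulVec_psiW]

theorem psiW_expectation_kronecker_le {m₁ m₂ m₃ : Type*} [Fintype m₁] [Fintype m₂] [Fintype m₃]
    (B₁ : Matrix m₁ (Fin 2) ℂ) (B₂ : Matrix m₂ (Fin 2) ℂ) (B₃ : Matrix m₃ (Fin 2) ℂ) :
    star psiW ⬝ᵥ (((B₁ᴴ * B₁) ⊗ₖ ((B₂ᴴ * B₂) ⊗ₖ (B₃ᴴ * B₃))) *ᵥ psiW) ≤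
      4 / 9 * ((B₁ᴴ * B₁).trace * (B₂ᴴ * B₂).trace * (B₃ᴴ * B₃).trace) := by
  rw [psiW_expectation_gram, trace_conjTranspose_mul_self, trace_conjTranspose_mul_self,
    trace_conjTranspose_mul_self]
  have bound : ∑ k : m₁ × m₂ × m₃, ‖ovW (B₁ k.1) (B₂ k.2.1) (B₃ k.2.2)‖ ^ 2 ≤
      4 / 9 * ((∑ k, ∑ i, ‖B₁ k i‖ ^ 2) * (∑ k, ∑ i, ‖B₂ k i‖ ^ 2) * (∑ k, ∑ i, ‖B₃ k i‖ ^ 2)) :=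
    calc ∑ k : m₁ × m₂ × m₃, ‖ovW (B₁ k.1) (B₂ k.2.1) (B₃ k.2.2)‖ ^ 2
        ≤ ∑ k : m₁ × m₂ × m₃, 4 / 9 * ((∑ i, ‖B₁ k.1 i‖ ^ 2) * (∑ i, ‖B₂ k.2.1 i‖ ^ 2) *
            (∑ i, ‖B₃ k.2.2 i‖ ^ 2)) := Finset.sum_le_sum fun k _ => norm_ovW_sq_le _ _ _
      _ = _ := by
        rw [← Finset.mul_sum, Fintype.sum_prod_mul_mul (fun k => ∑ i, ‖B₁ k i‖ ^ 2)
          (fun k => ∑ i, ‖B₂ k i‖ ^ 2) (fun k => ∑ i, ‖B₃ k i‖ ^ 2)]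
  have := Complex.real_le_real.2 bound
  push_cast at this ⊢
  exact this

open scoped MatrixOrder in
theorem trace_wWitness_mul_kronecker_nonneg {ρ₁ ρ₂ ρ₃ : Matrix (Fin 2) (Fin 2) ℂ}
    (h₁ : ρ₁.PosSemidef) (h₂ : ρ₂.PosSemidef) (h₃ : ρ₃.PosSemidef) :
    0 ≤ ((((4 / 9 : ℝ) : ℂ) • 1 - vecMulVec psiW (star psiW)) * (ρ₁ ⊗ₖ (ρ₂ ⊗ₖ ρ₃))).trace := by
  obtain ⟨B₁, rfl⟩ := CStarAlgebra.nonneg_iff_eq_star_mul_self.mp h₁.nonneg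
  obtain ⟨B₂, rfl⟩ := CStarAlgebra.nonneg_iff_eq_star_mul_self.mp h₂.nonneg
  obtain ⟨B₃, rfl⟩ := CStarAlgebra.nonneg_iff_eq_star_mul_self.mp h₃.nonneg
  rw [sub_mul, trace_sub, smul_mul, one_mul, trace_smul, trace_kronecker, trace_kronecker,
    trace_vecMulVec_mul, sub_nonneg, smul_eq_mul, star_eq_conjTranspose, star_eq_conjTranspose,
    star_eq_conjTranspose]
  calc _ ≤ _ := psiW_expectation_kronecker_le B₁ B₂ B₃
    _ = _ := by push_cast; ring

/-- The maximal squared overlap of |ψ_W⟩ with a product pure state is 4/9;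
consequently Tr[(4/9·I₈ − |ψ_W⟩⟨ψ_W|)σ] ≥ 0 for every fully separable
three-qubit state σ. -/
theorem stmt13 :
    (∀ a b c : Fin 2 → ℂ,
      (∑ i, ‖a i‖ ^ 2 = 1) → (∑ i, ‖b i‖ ^ 2 = 1) → (∑ i, ‖c i‖ ^ 2 = 1) →
      ‖ovW a b c‖ ^ 2 ≤ 4 / 9) ∧
    (∃ a b c : Fin 2 → ℂ,
      (∑ i, ‖a i‖ ^ 2 = 1) ∧ (∑ i, ‖b i‖ ^ 2 = 1) ∧ (∑ i, ‖c i‖ ^ 2 = 1) ∧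
      ‖ovW a b c‖ ^ 2 = 4 / 9) ∧
    (∀ (n : ℕ) (q : Fin n → ℝ) (σ₁ σ₂ σ₃ : Fin n → Matrix (Fin 2) (Fin 2) ℂ),
      (∀ x, 0 ≤ q x) → (∑ x, q x = 1) →
      (∀ x, IsDensity (σ₁ x)) → (∀ x, IsDensity (σ₂ x)) → (∀ x, IsDensity (σ₃ x)) →
      0 ≤ ((((4 / 9 : ℝ) : ℂ) • 1 - vecMulVec psiW (star psiW)) *
        ∑ x, (q x : ℂ) • (σ₁ x ⊗ₖ (σ₂ x ⊗ₖ σ₃ x))).trace) := by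
  refine ⟨fun a b c ha hb hc => ?_, ?_, ?_⟩
  · simpa [ha, hb, hc] using norm_ovW_sq_le a b c
  · refine ⟨wMaximizer, wMaximizer, wMaximizer, sum_norm_sq_wMaximizer, sum_norm_sq_wMaximizer,
      sum_norm_sq_wMaximizer, ?_⟩
    rw [ovW_wMaximizer]
    norm_num
  · intro n q σ₁ σ₂ σ₃ hq _ h₁ h₂ h₃
    rw [Matrix.mul_sum, trace_sum]
    refine Finset.sum_nonneg fun x _ => ?_
    rw [Matrix.mul_smul, trace_smul, smul_eq_mul]
    exact mul_nonneg (Complex.zero_le_real.mpr (hq x))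
      (trace_wWitness_mul_kronecker_nonneg (h₁ x).1 (h₂ x).1 (h₃ x).1)
end
end
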